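/- arXiv:2306.01485 — 6 statements merged into one kernel-verified Lean document; each statement's English description precedes it below -/
import Mathlib

section
/- Let X, Y, Z be finite-dimensional real normed vector spaces, let ψ : X → Y and φ : Y → Z be continuous maps, and assume cond(ψ) < ∞ and cond(φ) < ∞. Then cond(φ ∘ ψ) ≤ cond(φ) · cond(ψ). -/
open scoped ENNReal NNReal

/-- Relative error ratio `R(f,x;δ) = (‖f(x+δ)−f(x)‖/‖f(x)‖) / (‖δ‖/‖x‖)`,
with values in `[0,∞]`. -/
noncomputable def relErrRatio {X Y : Type*} [NormedAddCommGroup X] [NormedAddCommGroup Y]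
    (f : X → Y) (x δ : X) : ℝ≥0∞ :=
  ((‖f (x + δ) - f x‖₊ : ℝ≥0∞) / (‖f x‖₊ : ℝ≥0∞)) / ((‖δ‖₊ : ℝ≥0∞) / (‖x‖₊ : ℝ≥0∞))

/-- Local condition number `cond(f;x)`. -/
noncomputable def condAt {X Y : Type*} [NormedAddCommGroup X] [NormedAddCommGroup Y]
    (f : X → Y) (x : X) : ℝ≥0∞ :=
  ⨅ (ε : ℝ) (_ : 0 < ε), ⨆ (δ : X) (_ : δ ≠ 0) (_ : ‖δ‖ ≤ ε * ‖x‖), relErrRatio f x δ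

/-- Global condition number `cond(f)`. -/
noncomputable def condGlobal {X Y : Type*} [NormedAddCommGroup X] [NormedAddCommGroup Y]
    (f : X → Y) : ℝ≥0∞ :=
  ⨆ (x : X) (_ : x ≠ 0), condAt f x

/-! Where `ψ x ≠ 0` and `ψ(x+δ) ≠ ψ x`, relative error ratios multiply along a composition,
`R(φ ∘ ψ, x; δ) = R(φ, ψ x; ψ(x+δ) - ψ x) · R(ψ, x; δ)`, and continuity of `ψ` makes the
perturbation `ψ(x+δ) - ψ x` relatively small when `δ` is; passing to small `δ` bounds
`cond(φ ∘ ψ; x)` by `cond(φ; ψ x) · cond(ψ; x)`. At a zero `x` of `ψ` any perturbation that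
moves `ψ x` has ratio `∞`, so `cond(ψ; x) < ∞` forces `ψ` to be constant near `x`, and then
`cond(φ ∘ ψ; x) = 0`. -/

section CondAt

variable {X Y Z : Type*} [NormedAddCommGroup X] [NormedAddCommGroup Y] [NormedAddCommGroup Z]

lemma relErrRatio_eq_zero_of_apply_eq {f : X → Y} {x δ : X} (h : f (x + δ) = f x) :
    relErrRatio f x δ = 0 := by
  simp [relErrRatio, h]

lemma relErrRatio_eq_top_of_apply_eq_zero {f : X → Y} {x δ : X} (hx : x ≠ 0) (hfx : f x = 0)
    (h : f (x + δ) ≠ f x) : relErrRatio f x δ = ⊤ := by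
  have hnum : (‖f (x + δ)‖₊ : ℝ≥0∞) ≠ 0 := by simpa [hfx] using h
  have hden : (‖δ‖₊ : ℝ≥0∞) / (‖x‖₊ : ℝ≥0∞) ≠ ⊤ :=
    ENNReal.div_ne_top ENNReal.coe_ne_top (by simpa using hx)
  rw [relErrRatio, hfx, sub_zero, nnnorm_zero, ENNReal.coe_zero, ENNReal.div_zero hnum,
    ENNReal.top_div_of_ne_top hden]

lemma relErrRatio_comp {ψ : X → Y} {φ : Y → Z} {x δ : X} (hy : ψ x ≠ 0)
    (h : ψ (x + δ) ≠ ψ x) :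
    relErrRatio (φ ∘ ψ) x δ = relErrRatio φ (ψ x) (ψ (x + δ) - ψ x) * relErrRatio ψ x δ := by
  have ht0 : (‖ψ (x + δ) - ψ x‖₊ : ℝ≥0∞) / (‖ψ x‖₊ : ℝ≥0∞) ≠ 0 :=
    ENNReal.div_ne_zero.2 ⟨by simpa [sub_eq_zero] using h, ENNReal.coe_ne_top⟩
  have htop : (‖ψ (x + δ) - ψ x‖₊ : ℝ≥0∞) / (‖ψ x‖₊ : ℝ≥0∞) ≠ ⊤ :=
    ENNReal.div_ne_top ENNReal.coe_ne_top (by simpa using hy)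
  simp only [relErrRatio, Function.comp_apply, add_sub_cancel]
  set t := (‖ψ (x + δ) - ψ x‖₊ : ℝ≥0∞) / ‖ψ x‖₊
  rw [div_eq_mul_inv t, ← mul_assoc, ENNReal.div_mul_cancel ht0 htop, div_eq_mul_inv]

lemma condAt_le_of_forall {f : X → Y} {x : X} {c : ℝ≥0∞} {ε : ℝ} (hε : 0 < ε)
    (h : ∀ δ, δ ≠ 0 → ‖δ‖ ≤ ε * ‖x‖ → relErrRatio f x δ ≤ c) : condAt f x ≤ c :=
  (iInf₂_le ε hε).trans <| iSup₂_le fun δ hδ => iSup_le (h δ hδ)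

lemma exists_forall_relErrRatio_lt_of_condAt_lt {f : X → Y} {x : X} {c : ℝ≥0∞}
    (h : condAt f x < c) :
    ∃ ε > 0, ∀ δ, δ ≠ 0 → ‖δ‖ ≤ ε * ‖x‖ → relErrRatio f x δ < c := by
  obtain ⟨ε, hε, hlt⟩ := by simpa only [condAt, iInf_lt_iff] using h
  exact ⟨ε, hε, fun δ hδ hδε =>
    (le_iSup₂_of_le δ hδ (le_iSup (fun _ => relErrRatio f x δ) hδε)).trans_lt hlt⟩

lemma condAt_le_condGlobal (f : X → Y) {x : X} (hx : x ≠ 0) : condAt f x ≤ condGlobal f :=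
  le_iSup₂_of_le x hx le_rfl

lemma condAt_comp_eq_zero_of_apply_eq_zero (ψ : X → Y) (φ : Y → Z) {x : X} (hx : x ≠ 0)
    (hψx : ψ x = 0) (hψ : condAt ψ x ≠ ⊤) : condAt (φ ∘ ψ) x = 0 := by
  obtain ⟨ε, hε, hlt⟩ := exists_forall_relErrRatio_lt_of_condAt_lt hψ.lt_top
  refine le_antisymm (condAt_le_of_forall hε fun δ hδ hδε => ?_) zero_le
  have hconst : ψ (x + δ) = ψ x := by
    by_contra hne
    exact (hlt δ hδ hδε).ne (relErrRatio_eq_top_of_apply_eq_zero hx hψx hne)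
  exact (relErrRatio_eq_zero_of_apply_eq (f := φ ∘ ψ) (congrArg φ hconst)).le

lemma condAt_comp_le_mul {ψ : X → Y} {φ : Y → Z} {x : X} (hx : x ≠ 0) (hψx : ψ x ≠ 0)
    (hψc : ContinuousAt ψ x) (h₁ : condAt φ (ψ x) ≠ 0 ∨ condAt ψ x ≠ ⊤)
    (h₂ : condAt φ (ψ x) ≠ ⊤ ∨ condAt ψ x ≠ 0) :
    condAt (φ ∘ ψ) x ≤ condAt φ (ψ x) * condAt ψ x := by
  refine ENNReal.le_mul_of_forall_lt h₁ h₂ fun c hc d hd => ?_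
  obtain ⟨εφ, hεφ, hφlt⟩ := exists_forall_relErrRatio_lt_of_condAt_lt hc
  obtain ⟨εψ, hεψ, hψlt⟩ := exists_forall_relErrRatio_lt_of_condAt_lt hd
  obtain ⟨ρ, hρ, hcont⟩ :=
    Metric.continuousAt_iff.1 hψc (εφ * ‖ψ x‖) (mul_pos hεφ (norm_pos_iff.2 hψx))
  have hxn : 0 < ‖x‖ := norm_pos_iff.2 hx
  refine condAt_le_of_forall (ε := min εψ (ρ / (2 * ‖x‖))) (by positivity)
    fun δ hδ hδε => ?_
  by_cases hconst : ψ (x + δ) = ψ x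
  · simp [relErrRatio_eq_zero_of_apply_eq (f := φ ∘ ψ) (congrArg φ hconst)]
  have hδψ : ‖δ‖ ≤ εψ * ‖x‖ := hδε.trans (by gcongr; exact min_le_left _ _)
  have hδρ : ‖δ‖ < ρ := by
    have : ‖δ‖ ≤ ρ / (2 * ‖x‖) * ‖x‖ := hδε.trans (by gcongr; exact min_le_right _ _)
    rw [div_mul_eq_mul_div, mul_div_mul_right _ _ hxn.ne'] at this
    linarith
  have hηφ : ‖ψ (x + δ) - ψ x‖ ≤ εφ * ‖ψ x‖ := by
    rw [← dist_eq_norm]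
    exact (hcont (by simpa [dist_eq_norm] using hδρ)).le
  rw [relErrRatio_comp hψx hconst]
  exact mul_le_mul' (hφlt _ (sub_ne_zero.2 hconst) hηφ).le (hψlt δ hδ hδψ).le

end CondAt

theorem condGlobal_comp_le_general {X Y Z : Type*}
    [NormedAddCommGroup X] [NormedAddCommGroup Y] [NormedAddCommGroup Z]
    (ψ : X → Y) (φ : Y → Z) (hψc : Continuous ψ)
    (hψ : condGlobal ψ < ⊤) (hφ : condGlobal φ < ⊤) :
    condGlobal (φ ∘ ψ) ≤ condGlobal φ * condGlobal ψ := by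
  refine iSup₂_le fun x hx => ?_
  have hψx_le := condAt_le_condGlobal ψ hx
  by_cases hψx : ψ x = 0
  · simp [condAt_comp_eq_zero_of_apply_eq_zero ψ φ hx hψx (hψx_le.trans_lt hψ).ne]
  have hφx_le := condAt_le_condGlobal φ hψx
  calc condAt (φ ∘ ψ) x ≤ condAt φ (ψ x) * condAt ψ x :=
        condAt_comp_le_mul hx hψx hψc.continuousAt (.inr (hψx_le.trans_lt hψ).ne)
          (.inl (hφx_le.trans_lt hφ).ne)
    _ ≤ condGlobal φ * condGlobal ψ := mul_le_mul' hφx_le hψx_le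

theorem condGlobal_comp_le {X Y Z : Type*}
    [NormedAddCommGroup X] [NormedSpace ℝ X] [FiniteDimensional ℝ X]
    [NormedAddCommGroup Y] [NormedSpace ℝ Y] [FiniteDimensional ℝ Y]
    [NormedAddCommGroup Z] [NormedSpace ℝ Z] [FiniteDimensional ℝ Z]
    (ψ : X → Y) (φ : Y → Z) (hψc : Continuous ψ) (hφc : Continuous φ)
    (hψ : condGlobal ψ < ⊤) (hφ : condGlobal φ < ⊤) :
    condGlobal (φ ∘ ψ) ≤ condGlobal φ * condGlobal ψ :=
  condGlobal_comp_le_general ψ φ hψc hψ hφ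
end

section
/- Fix integers n, m and r with 1 ≤ r ≤ min(n,m), and let B be any n×m real matrix. Then there exists a constant C > 0 (depending only on B, n, m, r) such that for all n×m real matrices W and W' of rank r satisfying ‖W − W'‖_F ≤ s_min(W)/2, one has ‖P_W(B) − P_{W'}(B)‖_F ≤ C · s_min(W)⁻¹ · ‖W − W'‖_F. -/
/-!
Work in the operator norm, which is dominated by the Frobenius norm and dominates it up to
`√(n m)`. Since projections have norm at most `1`, the tangent projections differ by at most
`2 ‖B‖ (‖Π_col W - Π_col W'‖ + ‖Π_row W - Π_row W'‖)`, so it suffices to show `‖Π_col W - Π_col W'‖ ≤ 3 δ` with `δ = ‖W - W'‖ / s_min W ≤ 1/2`;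
rows are columns of the transpose, which has the same `s_min`. Writing `u ∈ range W` as
`u = W x` with `x ⊥ ker W` gives `s_min W ‖x‖ ≤ ‖u‖`, so `W' x` lies within `δ ‖u‖` of `u`.
As both ranges have dimension `r`, the projection onto `range W'` maps `range W` onto it, which
gives the reverse estimate with `2 δ`, and `P - P' = P (1 - P') - (1 - P) P'` with
`‖P (1 - P')‖ = ‖(1 - P') P‖` yields `3 δ`.
-/

open Matrix

noncomputable def frobNorm {n m : ℕ} (M : Matrix (Fin n) (Fin m) ℝ) : ℝ :=
  Real.sqrt (∑ i, ∑ j, (M i j) ^ 2)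

/-- The matrix of the orthogonal projection onto the column space of `W`,
in the standard basis of Euclidean space. -/
noncomputable def colProj {n m : ℕ} (W : Matrix (Fin n) (Fin m) ℝ) :
    Matrix (Fin n) (Fin n) ℝ :=
  LinearMap.toMatrix (EuclideanSpace.basisFun (Fin n) ℝ).toBasis
    (EuclideanSpace.basisFun (Fin n) ℝ).toBasis
    ((LinearMap.range (Matrix.toEuclideanLin W)).subtype ∘ₗ
      (Submodule.orthogonalProjectionOnto (LinearMap.range (Matrix.toEuclideanLin W))).toLinearMap)

/-- The matrix of the orthogonal projection onto the row space of `W`. -/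
noncomputable def rowProj {n m : ℕ} (W : Matrix (Fin n) (Fin m) ℝ) :
    Matrix (Fin m) (Fin m) ℝ :=
  colProj Wᵀ

/-- Tangent-space projection of the rank-`r` matrix manifold at `W`. -/
noncomputable def tangentProj {n m : ℕ} (W B : Matrix (Fin n) (Fin m) ℝ) :
    Matrix (Fin n) (Fin m) ℝ :=
  colProj W * B + B * rowProj W - colProj W * B * rowProj W

/-- The smallest positive singular value of `W`: the infimum of `‖Wx‖` over unit
vectors `x` orthogonal to the kernel of `W`. -/
noncomputable def sMin {n m : ℕ} (W : Matrix (Fin n) (Fin m) ℝ) : ℝ :=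
  sInf {c : ℝ | ∃ x : EuclideanSpace ℝ (Fin m), ‖x‖ = 1 ∧
    x ∈ (LinearMap.ker (Matrix.toEuclideanLin W))ᗮ ∧ c = ‖Matrix.toEuclideanLin W x‖}

namespace Submodule

variable {𝕜 E : Type*} [RCLike 𝕜] [NormedAddCommGroup E] [InnerProductSpace 𝕜 E]

theorem norm_starProjection_comp_comm [CompleteSpace E] (U V : Submodule 𝕜 E)
    [U.HasOrthogonalProjection] [V.HasOrthogonalProjection] :
    ‖U.starProjection ∘L V.starProjection‖ = ‖V.starProjection ∘L U.starProjection‖ := by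
  rw [← ContinuousLinearMap.adjoint.norm_map, ContinuousLinearMap.adjoint_comp,
    (isSelfAdjoint_starProjection U).adjoint_eq, (isSelfAdjoint_starProjection V).adjoint_eq]

theorem norm_sub_starProjection_le (K : Submodule 𝕜 E) [K.HasOrthogonalProjection] (y : E)
    {x : E} (hx : x ∈ K) : ‖y - K.starProjection y‖ ≤ ‖y - x‖ := by
  rw [starProjection_minimal]
  exact ciInf_le ⟨0, Set.forall_mem_range.2 fun _ => norm_nonneg _⟩ (⟨x, hx⟩ : K)

variable {U V : Submodule 𝕜 E} {δ : ℝ}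

theorem norm_starProjection_orthogonal_comp_le [U.HasOrthogonalProjection]
    [V.HasOrthogonalProjection] (hδ : 0 ≤ δ)
    (hUV : ∀ u ∈ U, ‖u - V.starProjection u‖ ≤ δ * ‖u‖) :
    ‖Vᗮ.starProjection ∘L U.starProjection‖ ≤ δ :=
  ContinuousLinearMap.opNorm_le_bound _ hδ fun x => by
    rw [ContinuousLinearMap.comp_apply, starProjection_orthogonal_val]
    exact (hUV _ (U.starProjection_apply_mem x)).trans
      (mul_le_mul_of_nonneg_left (U.norm_starProjection_apply_le x) hδ)

theorem exists_starProjection_eq_of_finrank_eq [FiniteDimensional 𝕜 U] [FiniteDimensional 𝕜 V]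
    (hdim : Module.finrank 𝕜 U = Module.finrank 𝕜 V) (hδ : δ < 1)
    (hUV : ∀ u ∈ U, ‖u - V.starProjection u‖ ≤ δ * ‖u‖) {v : E} (hv : v ∈ V) :
    ∃ u ∈ U, V.starProjection u = v := by
  have hinj : Function.Injective (V.orthogonalProjectionOnto.toLinearMap ∘ₗ U.subtype) := by
    rw [← LinearMap.ker_eq_bot, LinearMap.ker_eq_bot']
    intro u hu
    have hu0 : V.starProjection (u : E) = 0 := congrArg Subtype.val hu
    have h := hUV u u.2
    rw [hu0, sub_zero] at h
    exact norm_eq_zero.1 (by nlinarith [norm_nonneg (u : E)]) |> ZeroMemClass.coe_eq_zero.1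
  obtain ⟨u, hu⟩ := (LinearMap.injective_iff_surjective_of_finrank_eq_finrank hdim).1 hinj ⟨v, hv⟩
  exact ⟨u, u.2, congrArg Subtype.val hu⟩

theorem norm_sub_starProjection_le_of_finrank_eq [FiniteDimensional 𝕜 U]
    [FiniteDimensional 𝕜 V] (hdim : Module.finrank 𝕜 U = Module.finrank 𝕜 V) (hδ₀ : 0 ≤ δ)
    (hδ : δ ≤ 1 / 2) (hUV : ∀ u ∈ U, ‖u - V.starProjection u‖ ≤ δ * ‖u‖) :
    ∀ v ∈ V, ‖v - U.starProjection v‖ ≤ 2 * δ * ‖v‖ := by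
  intro v hv
  obtain ⟨u, hu, rfl⟩ := exists_starProjection_eq_of_finrank_eq hdim (by linarith) hUV hv
  have hclose := hUV u hu
  have hu_le : ‖u‖ ≤ 2 * ‖V.starProjection u‖ := by
    have := norm_sub_norm_le u (V.starProjection u)
    nlinarith [norm_nonneg u]
  calc ‖V.starProjection u - U.starProjection (V.starProjection u)‖
      ≤ ‖V.starProjection u - u‖ := U.norm_sub_starProjection_le _ hu
    _ ≤ δ * (2 * ‖V.starProjection u‖) := by
        rw [norm_sub_rev]
        exact hclose.trans (mul_le_mul_of_nonneg_left hu_le hδ₀)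
    _ = 2 * δ * ‖V.starProjection u‖ := by ring

theorem norm_starProjection_sub_le_of_finrank_eq [CompleteSpace E] [FiniteDimensional 𝕜 U]
    [FiniteDimensional 𝕜 V] (hdim : Module.finrank 𝕜 U = Module.finrank 𝕜 V) (hδ₀ : 0 ≤ δ)
    (hδ : δ ≤ 1 / 2) (hUV : ∀ u ∈ U, ‖u - V.starProjection u‖ ≤ δ * ‖u‖) :
    ‖U.starProjection - V.starProjection‖ ≤ 3 * δ := by
  have hVU := norm_sub_starProjection_le_of_finrank_eq hdim hδ₀ hδ hUV
  have hdecomp : U.starProjection - V.starProjection =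
      U.starProjection ∘L Vᗮ.starProjection - Uᗮ.starProjection ∘L V.starProjection := by
    ext x
    simp [starProjection_orthogonal']
  calc ‖U.starProjection - V.starProjection‖
      ≤ ‖Vᗮ.starProjection ∘L U.starProjection‖ + ‖Uᗮ.starProjection ∘L V.starProjection‖ := by
        rw [hdecomp, norm_starProjection_comp_comm Vᗮ U]
        exact norm_sub_le _ _
    _ ≤ δ + 2 * δ := add_le_add (norm_starProjection_orthogonal_comp_le hδ₀ hUV)
        (norm_starProjection_orthogonal_comp_le (by linarith) hVU)
    _ = 3 * δ := by ring

end Submodule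

theorem LinearMap.exists_mem_orthogonal_ker_apply_eq {𝕜 E F : Type*} [RCLike 𝕜]
    [NormedAddCommGroup E] [InnerProductSpace 𝕜 E] [NormedAddCommGroup F] [InnerProductSpace 𝕜 F]
    (T : E →ₗ[𝕜] F) [(LinearMap.ker T).HasOrthogonalProjection] {y : F}
    (hy : y ∈ LinearMap.range T) : ∃ x ∈ (LinearMap.ker T)ᗮ, T x = y := by
  obtain ⟨x₀, rfl⟩ := hy
  obtain ⟨z, hz, x, hx, rfl⟩ := (LinearMap.ker T).exists_add_mem_mem_orthogonal x₀
  exact ⟨x, hx, by rw [map_add, LinearMap.mem_ker.1 hz, zero_add]⟩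

open scoped Matrix.Norms.L2Operator

namespace Matrix

variable {n m : ℕ}

theorem norm_toEuclideanLin_apply_le (A : Matrix (Fin n) (Fin m) ℝ)
    (x : EuclideanSpace ℝ (Fin m)) :
    ‖toEuclideanLin A x‖ ≤ ‖A‖ * ‖x‖ :=
  ((toEuclideanLin.trans LinearMap.toContinuousLinearMap) A).le_opNorm x

theorem abs_apply_le_l2_opNorm (A : Matrix (Fin n) (Fin m) ℝ) (i : Fin n) (j : Fin m) :
    |A i j| ≤ ‖A‖ := by
  calc |A i j| = ‖toEuclideanLin A (EuclideanSpace.single j 1) i‖ := by simp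
    _ ≤ ‖toEuclideanLin A (EuclideanSpace.single j 1)‖ := PiLp.norm_apply_le _ i
    _ ≤ ‖A‖ := by simpa using norm_toEuclideanLin_apply_le A (EuclideanSpace.single j 1)

theorem l2_opNorm_le_frobNorm (A : Matrix (Fin n) (Fin m) ℝ) : ‖A‖ ≤ frobNorm A := by
  refine ContinuousLinearMap.opNorm_le_bound _ (Real.sqrt_nonneg _) fun x => ?_
  rw [EuclideanSpace.norm_eq x, frobNorm, ← Real.sqrt_mul (by positivity),
    EuclideanSpace.norm_eq]
  refine Real.sqrt_le_sqrt ?_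
  simp only [Real.norm_eq_abs, sq_abs]
  rw [Finset.sum_mul]
  gcongr with i
  exact Finset.sum_mul_sq_le_sq_mul_sq Finset.univ (A i) x

theorem frobNorm_le_sqrt_mul_l2_opNorm (A : Matrix (Fin n) (Fin m) ℝ) :
    frobNorm A ≤ √(n * m) * ‖A‖ := by
  calc frobNorm A ≤ √(∑ _i : Fin n, ∑ _j : Fin m, ‖A‖ ^ 2) :=
        Real.sqrt_le_sqrt <| Finset.sum_le_sum fun i _ => Finset.sum_le_sum fun j _ =>
          sq_le_sq' (neg_le_of_abs_le (abs_apply_le_l2_opNorm A i j))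
            (le_of_abs_le (abs_apply_le_l2_opNorm A i j))
    _ = √(n * m) * ‖A‖ := by
        simp [Real.sqrt_sq (norm_nonneg A), mul_assoc]

theorem toEuclideanLin_colProj (W : Matrix (Fin n) (Fin m) ℝ) :
    toEuclideanLin (colProj W) =
      (LinearMap.range (toEuclideanLin W)).starProjection.toLinearMap := by
  rw [toEuclideanLin_eq_toLin_orthonormal]
  exact toLin_toMatrix _ _ _

theorem l2_opNorm_colProj_sub_colProj (W W' : Matrix (Fin n) (Fin m) ℝ) :
    ‖colProj W - colProj W'‖ = ‖(LinearMap.range (toEuclideanLin W)).starProjection -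
      (LinearMap.range (toEuclideanLin W')).starProjection‖ := by
  rw [l2_opNorm_def, map_sub]
  congr 2 <;> exact ContinuousLinearMap.coe_injective (toEuclideanLin_colProj _)

theorem l2_opNorm_colProj_le_one (W : Matrix (Fin n) (Fin m) ℝ) : ‖colProj W‖ ≤ 1 := by
  rw [l2_opNorm_def]
  convert (LinearMap.range (toEuclideanLin W)).starProjection_norm_le
  exact ContinuousLinearMap.coe_injective (toEuclideanLin_colProj _)

theorem finrank_range_toEuclideanLin (W : Matrix (Fin n) (Fin m) ℝ) :
    Module.finrank ℝ (LinearMap.range (toEuclideanLin W)) = W.rank := by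
  rw [toEuclideanLin_eq_toLin_orthonormal]
  exact (rank_eq_finrank_range_toLin W _ _).symm

theorem orthogonal_range_toEuclideanLin (W : Matrix (Fin n) (Fin m) ℝ) :
    (LinearMap.range (toEuclideanLin W))ᗮ = LinearMap.ker (toEuclideanLin Wᵀ) := by
  rw [← conjTranspose_eq_transpose_of_trivial, toEuclideanLin_conjTranspose_eq_adjoint]
  exact ContinuousLinearMap.orthogonal_range (LinearMap.toContinuousLinearMap (toEuclideanLin W))

end Matrix

section SMin

variable {n m : ℕ}

theorem sMin_nonneg (W : Matrix (Fin n) (Fin m) ℝ) : 0 ≤ sMin W :=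
  Real.sInf_nonneg fun _ ⟨_, _, _, hc⟩ => hc ▸ norm_nonneg _

theorem sMin_zero : sMin (0 : Matrix (Fin n) (Fin m) ℝ) = 0 := by
  rw [sMin, ← Real.sInf_empty]
  congr 1
  refine Set.eq_empty_of_forall_notMem fun _ ⟨x, hx1, hx, _⟩ => ?_
  simp_all

theorem sMin_mul_norm_le (W : Matrix (Fin n) (Fin m) ℝ) {x : EuclideanSpace ℝ (Fin m)}
    (hx : x ∈ (LinearMap.ker (toEuclideanLin W))ᗮ) : sMin W * ‖x‖ ≤ ‖toEuclideanLin W x‖ := by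
  rcases eq_or_ne x 0 with rfl | hx0
  · simp
  have hx_pos : 0 < ‖x‖ := norm_pos_iff.2 hx0
  have hunit : sMin W ≤ ‖toEuclideanLin W (‖x‖⁻¹ • x)‖ :=
    csInf_le ⟨0, fun _ ⟨_, _, _, hc⟩ => hc ▸ norm_nonneg _⟩
      ⟨‖x‖⁻¹ • x, norm_smul_inv_norm hx0, Submodule.smul_mem _ _ hx, rfl⟩
  rw [map_smul, norm_smul, norm_inv, norm_norm] at hunit
  rwa [le_inv_mul_iff₀ hx_pos, mul_comm] at hunit

theorem exists_toEuclideanLin_eq_sMin_mul_norm_le (W : Matrix (Fin n) (Fin m) ℝ)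
    {y : EuclideanSpace ℝ (Fin n)} (hy : y ∈ LinearMap.range (toEuclideanLin W)) :
    ∃ x, toEuclideanLin W x = y ∧ sMin W * ‖x‖ ≤ ‖y‖ := by
  obtain ⟨x, hx, rfl⟩ := (toEuclideanLin W).exists_mem_orthogonal_ker_apply_eq hy
  exact ⟨x, rfl, sMin_mul_norm_le W hx⟩

theorem sMin_le_sMin_transpose (W : Matrix (Fin n) (Fin m) ℝ) : sMin W ≤ sMin Wᵀ := by
  rcases eq_or_ne W 0 with rfl | hW
  · rw [transpose_zero, sMin_zero, sMin_zero]
  have horth : (LinearMap.ker (toEuclideanLin Wᵀ))ᗮ = LinearMap.range (toEuclideanLin W) := by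
    rw [← orthogonal_range_toEuclideanLin, Submodule.orthogonal_orthogonal]
  refine le_csInf ?_ ?_
  · obtain ⟨u, hu, hu0⟩ := Submodule.exists_mem_ne_zero_of_ne_bot <|
      LinearMap.range_eq_bot.not.2 <| (toEuclideanLin.map_eq_zero_iff).not.2 hW
    exact ⟨_, ‖u‖⁻¹ • u, norm_smul_inv_norm hu0, horth ▸ Submodule.smul_mem _ _ hu, rfl⟩
  · rintro _ ⟨y, hy1, hy, rfl⟩
    obtain ⟨x, rfl, hx⟩ := exists_toEuclideanLin_eq_sMin_mul_norm_le W (horth ▸ hy)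
    -- Cauchy–Schwarz on `⟪x, Wᵀ (W x)⟫ = ‖W x‖² = 1` against `sMin W * ‖x‖ ≤ ‖W x‖ = 1`.
    have hpair : 1 ≤ ‖x‖ * ‖toEuclideanLin Wᵀ (toEuclideanLin W x)‖ := by
      calc (1 : ℝ) = inner ℝ x (toEuclideanLin Wᵀ (toEuclideanLin W x)) := by
            rw [← conjTranspose_eq_transpose_of_trivial, toEuclideanLin_conjTranspose_eq_adjoint,
              LinearMap.adjoint_inner_right, real_inner_self_eq_norm_sq, hy1, one_pow]
        _ ≤ _ := real_inner_le_norm _ _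
    have hx_pos : 0 < ‖x‖ := norm_pos_iff.2 fun h => by simp [h] at hy1
    rw [hy1] at hx
    nlinarith

theorem sMin_transpose (W : Matrix (Fin n) (Fin m) ℝ) : sMin Wᵀ = sMin W :=
  le_antisymm (by simpa using sMin_le_sMin_transpose Wᵀ) (sMin_le_sMin_transpose W)

end SMin

namespace Matrix

variable {n m : ℕ}

theorem norm_sub_starProjection_range_le {W : Matrix (Fin n) (Fin m) ℝ}
    (hW : 0 < sMin W) (W' : Matrix (Fin n) (Fin m) ℝ) {u : EuclideanSpace ℝ (Fin n)}
    (hu : u ∈ LinearMap.range (toEuclideanLin W)) :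
    ‖u - (LinearMap.range (toEuclideanLin W')).starProjection u‖ ≤ ‖W - W'‖ / sMin W * ‖u‖ := by
  obtain ⟨x, rfl, hx⟩ := exists_toEuclideanLin_eq_sMin_mul_norm_le W hu
  calc _ ≤ ‖toEuclideanLin W x - toEuclideanLin W' x‖ :=
        Submodule.norm_sub_starProjection_le _ _ (LinearMap.mem_range_self _ x)
    _ ≤ ‖W - W'‖ * ‖x‖ := by simpa using norm_toEuclideanLin_apply_le (W - W') x
    _ ≤ ‖W - W'‖ / sMin W * ‖toEuclideanLin W x‖ := by
        rw [div_mul_eq_mul_div, le_div_iff₀ hW, mul_assoc]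
        exact mul_le_mul_of_nonneg_left (by linarith) (norm_nonneg _)

theorem l2_opNorm_colProj_sub_le {W W' : Matrix (Fin n) (Fin m) ℝ} (hrank : W.rank = W'.rank)
    (hW : 0 < sMin W) (hclose : ‖W - W'‖ ≤ sMin W / 2) :
    ‖colProj W - colProj W'‖ ≤ 3 * (‖W - W'‖ / sMin W) := by
  rw [l2_opNorm_colProj_sub_colProj]
  exact Submodule.norm_starProjection_sub_le_of_finrank_eq
    (by rw [finrank_range_toEuclideanLin, finrank_range_toEuclideanLin, hrank])
    (div_nonneg (norm_nonneg _) hW.le) (by rw [div_le_iff₀ hW]; linarith)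
    fun _ hu => norm_sub_starProjection_range_le hW W' hu

theorem l2_opNorm_rowProj_sub_le {W W' : Matrix (Fin n) (Fin m) ℝ} (hrank : W.rank = W'.rank)
    (hW : 0 < sMin W) (hclose : ‖W - W'‖ ≤ sMin W / 2) :
    ‖rowProj W - rowProj W'‖ ≤ 3 * (‖W - W'‖ / sMin W) := by
  have hT : ‖Wᵀ - W'ᵀ‖ = ‖W - W'‖ := by
    rw [← transpose_sub, ← conjTranspose_eq_transpose_of_trivial, l2_opNorm_conjTranspose]
  rw [← hT, ← sMin_transpose] at hclose ⊢
  rw [← sMin_transpose] at hW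
  exact l2_opNorm_colProj_sub_le (by rw [rank_transpose, rank_transpose, hrank]) hW hclose

theorem l2_opNorm_tangentProj_sub_le (W W' B : Matrix (Fin n) (Fin m) ℝ) :
    ‖tangentProj W B - tangentProj W' B‖ ≤
      2 * ‖B‖ * (‖colProj W - colProj W'‖ + ‖rowProj W - rowProj W'‖) := by
  set P := colProj W
  set P' := colProj W'
  set Q := rowProj W
  set Q' := rowProj W'
  have hQ : ‖Q‖ ≤ 1 := l2_opNorm_colProj_le_one Wᵀ
  have hP' : ‖P'‖ ≤ 1 := l2_opNorm_colProj_le_one W'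
  have hdecomp : tangentProj W B - tangentProj W' B =
      (P - P') * B + B * (Q - Q') - (P - P') * B * Q - P' * B * (Q - Q') := by
    simp only [tangentProj, P, P', Q, Q', Matrix.sub_mul, Matrix.mul_sub]
    abel
  have h₁ : ‖(P - P') * B‖ ≤ ‖P - P'‖ * ‖B‖ := l2_opNorm_mul _ _
  have h₂ : ‖B * (Q - Q')‖ ≤ ‖B‖ * ‖Q - Q'‖ := l2_opNorm_mul _ _
  have h₃ : ‖(P - P') * B * Q‖ ≤ ‖P - P'‖ * ‖B‖ :=
    calc _ ≤ ‖(P - P') * B‖ * ‖Q‖ := l2_opNorm_mul _ _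
      _ ≤ ‖(P - P') * B‖ := mul_le_of_le_one_right (norm_nonneg _) hQ
      _ ≤ _ := h₁
  have h₄ : ‖P' * B * (Q - Q')‖ ≤ ‖B‖ * ‖Q - Q'‖ :=
    calc _ ≤ ‖P' * B‖ * ‖Q - Q'‖ := l2_opNorm_mul _ _
      _ ≤ ‖P'‖ * ‖B‖ * ‖Q - Q'‖ := by gcongr; exact l2_opNorm_mul _ _
      _ ≤ _ := by gcongr; exact mul_le_of_le_one_left (norm_nonneg _) hP'
  rw [hdecomp]
  have := norm_sub_le ((P - P') * B + B * (Q - Q') - (P - P') * B * Q) (P' * B * (Q - Q'))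
  have := norm_sub_le ((P - P') * B + B * (Q - Q')) ((P - P') * B * Q)
  have := norm_add_le ((P - P') * B) (B * (Q - Q'))
  linarith

end Matrix

theorem curvature_bound_general {n m r : ℕ}
    (B : Matrix (Fin n) (Fin m) ℝ) :
    ∃ C : ℝ, 0 < C ∧ ∀ W W' : Matrix (Fin n) (Fin m) ℝ,
      W.rank = r → W'.rank = r → frobNorm (W - W') ≤ sMin W / 2 →
        frobNorm (tangentProj W B - tangentProj W' B) ≤
          C * (sMin W)⁻¹ * frobNorm (W - W') := by
  refine ⟨12 * √(n * m) * ‖B‖ + 1, by positivity, fun W W' hW hW' hclose => ?_⟩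
  have hop : ‖W - W'‖ ≤ frobNorm (W - W') := l2_opNorm_le_frobNorm _
  rcases (sMin_nonneg W).eq_or_lt with hσ | hσ
  · obtain rfl : W = W' := sub_eq_zero.1 (norm_le_zero_iff.1 (by linarith))
    simp [frobNorm]
  have hrank : W.rank = W'.rank := hW.trans hW'.symm
  have hδ : ‖W - W'‖ / sMin W ≤ (sMin W)⁻¹ * frobNorm (W - W') := by
    rw [inv_mul_eq_div]; gcongr
  calc frobNorm (tangentProj W B - tangentProj W' B)
      ≤ √(n * m) * ‖tangentProj W B - tangentProj W' B‖ := frobNorm_le_sqrt_mul_l2_opNorm _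
    _ ≤ √(n * m) * (2 * ‖B‖ * (3 * (‖W - W'‖ / sMin W) + 3 * (‖W - W'‖ / sMin W))) := by
        grw [l2_opNorm_tangentProj_sub_le, l2_opNorm_colProj_sub_le hrank hσ (by linarith),
          l2_opNorm_rowProj_sub_le hrank hσ (by linarith)]
    _ = 12 * √(n * m) * ‖B‖ * (‖W - W'‖ / sMin W) := by ring
    _ ≤ (12 * √(n * m) * ‖B‖ + 1) * ((sMin W)⁻¹ * frobNorm (W - W')) :=
        mul_le_mul (by linarith) hδ (div_nonneg (norm_nonneg _) hσ.le) (by positivity)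
    _ = (12 * √(n * m) * ‖B‖ + 1) * (sMin W)⁻¹ * frobNorm (W - W') := (mul_assoc _ _ _).symm

theorem curvature_bound {n m r : ℕ} (hr1 : 1 ≤ r) (hrn : r ≤ n) (hrm : r ≤ m)
    (B : Matrix (Fin n) (Fin m) ℝ) :
    ∃ C : ℝ, 0 < C ∧ ∀ W W' : Matrix (Fin n) (Fin m) ℝ,
      W.rank = r → W'.rank = r → frobNorm (W - W') ≤ sMin W / 2 →
        frobNorm (tangentProj W B - tangentProj W' B) ≤
          C * (sMin W)⁻¹ * frobNorm (W - W') :=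
  curvature_bound_general B
end

section
/- Let γ > 0, η > 0, and 0 < T < π/(2√(ηγ)). Let e : [0,T] → ℝ be continuous with e(0) = 0, differentiable on (0,T), and satisfying e'(t) ≤ γ·e(t)² + η for all t ∈ (0,T). Then e(t) ≤ √(η/γ) · tan(t√(ηγ)) for all t ∈ [0,T]. -/
/-!
Perturb the comparison function to `√(b/γ) tan((t + s)√(bγ))` with `b > η` and `s > 0`. It solves
`z' = γ z² + b`, so at any point where it touched `e` it would grow strictly faster than `e`, and it
starts strictly above `e(0) = 0`; hence it stays above `e` on `[0, T]`. Letting `b → η` and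
`s → 0` gives the bound, since `T√(ηγ) < π/2` keeps `tan` continuous along the way.
-/

open Set Real Filter Topology

theorem image_le_of_deriv_lt_deriv_boundary_of_lt {f f' B B' : ℝ → ℝ} {a b : ℝ}
    (hf : ContinuousOn f (Icc a b)) (hf' : ∀ x ∈ Ioo a b, HasDerivAt f (f' x) x)
    (ha : f a < B a) (hB : ContinuousOn B (Icc a b))
    (hB' : ∀ x ∈ Ioo a b, HasDerivAt B (B' x) x)
    (bound : ∀ x ∈ Ioo a b, f x = B x → f' x < B' x) :
    ∀ ⦃x⦄, x ∈ Icc a b → f x ≤ B x := by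
  intro x hx
  rcases hx.1.eq_or_lt with rfl | hax
  · exact ha.le
  -- Restart at some `c ∈ (a, x)` with `f c < B c`, where both functions are differentiable.
  obtain ⟨c, hfBc, hc⟩ : ∃ c, f c < B c ∧ c ∈ Ioo a x := by
    have hcont : ContinuousWithinAt (fun y => B y - f y) (Ioo a x) a :=
      ((hB.sub hf) a (left_mem_Icc.2 (hax.le.trans hx.2))).mono
        (Ioo_subset_Icc_self.trans (Icc_subset_Icc_right hx.2))
    have : (𝓝[Ioo a x] a).NeBot := left_nhdsWithin_Ioo_neBot hax
    obtain ⟨c, hc, hcI⟩ := ((continuousWithinAt_const.eventually_lt hcont (sub_pos.2 ha)).and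
      self_mem_nhdsWithin).exists
    exact ⟨c, sub_pos.1 hc, hcI⟩
  have hIco : Ico c b ⊆ Ioo a b := fun y hy => ⟨hc.1.trans_le hy.1, hy.2⟩
  have hIcc : Icc c b ⊆ Icc a b := Icc_subset_Icc_left hc.1.le
  exact image_le_of_deriv_right_lt_deriv_boundary' (hf.mono hIcc)
    (fun y hy => (hf' y (hIco hy)).hasDerivWithinAt) hfBc.le (hB.mono hIcc)
    (fun y hy => (hB' y (hIco hy)).hasDerivWithinAt) (fun y hy => bound y (hIco hy))
    ⟨hc.2.le, hx.2⟩

noncomputable def riccatiTan (γ b t : ℝ) : ℝ := √(b / γ) * tan (t * √(b * γ))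

theorem hasDerivAt_riccatiTan {γ b t : ℝ} (hγ : 0 < γ) (hb : 0 ≤ b)
    (hcos : cos (t * √(b * γ)) ≠ 0) :
    HasDerivAt (riccatiTan γ b) (γ * riccatiTan γ b t ^ 2 + b) t := by
  have htan : HasDerivAt (fun t => tan (t * √(b * γ)))
      ((1 + tan (t * √(b * γ)) ^ 2) * √(b * γ)) t := by
    have := (hasDerivAt_tan hcos).comp t ((hasDerivAt_id t).mul_const √(b * γ))
    rwa [one_div, ← inv_one_add_tan_sq hcos, inv_inv, one_mul] at this
  refine (htan.const_mul √(b / γ)).congr_deriv ?_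
  have hsq : √(b / γ) ^ 2 = b / γ := sq_sqrt (div_nonneg hb hγ.le)
  have hprod : √(b / γ) * √(b * γ) = b := by
    rw [← sqrt_mul (div_nonneg hb hγ.le), show b / γ * (b * γ) = b ^ 2 by field_simp, sqrt_sq hb]
  simp only [riccatiTan, mul_pow, hsq]
  field_simp
  linear_combination (1 + tan (t * √(b * γ)) ^ 2) * hprod

theorem continuousAt_riccatiTan {γ b t : ℝ} (hcos : cos (t * √(b * γ)) ≠ 0) :
    ContinuousAt (fun p : ℝ × ℝ => riccatiTan γ p.1 p.2) (b, t) := by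
  unfold riccatiTan
  have : ContinuousAt (fun p : ℝ × ℝ => tan (p.2 * √(p.1 * γ))) (b, t) :=
    (continuousAt_tan.2 hcos).comp (x := (b, t)) (f := fun p : ℝ × ℝ => p.2 * √(p.1 * γ))
      (by fun_prop)
  fun_prop

theorem le_riccatiTan_add_of_deriv_le {γ η b s T : ℝ} (hγ : 0 < γ) (hb : 0 < b) (hηb : η < b)
    (hs : 0 < s) (hTs : (T + s) * √(b * γ) < π / 2) {e : ℝ → ℝ}
    (he_cont : ContinuousOn e (Icc 0 T)) (he0 : e 0 = 0)
    (he_diff : ∀ t ∈ Ioo 0 T, DifferentiableAt ℝ e t)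
    (he_ineq : ∀ t ∈ Ioo 0 T, deriv e t ≤ γ * e t ^ 2 + η) :
    ∀ t ∈ Icc 0 T, e t ≤ riccatiTan γ b (t + s) := by
  have hk : 0 < √(b * γ) := sqrt_pos.2 (mul_pos hb hγ)
  have harg : ∀ t ∈ Icc 0 T, (t + s) * √(b * γ) ∈ Ioo (-(π / 2)) (π / 2) := fun t ht =>
    ⟨by nlinarith [pi_pos, ht.1],
      (mul_le_mul_of_nonneg_right (by linarith [ht.2]) hk.le).trans_lt hTs⟩
  have hderiv : ∀ t ∈ Icc 0 T,
      HasDerivAt (fun t => riccatiTan γ b (t + s)) (γ * riccatiTan γ b (t + s) ^ 2 + b) t :=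
    fun t ht =>
      (hasDerivAt_riccatiTan hγ hb.le (cos_pos_of_mem_Ioo (harg t ht)).ne').comp_add_const t s
  intro t ht
  have hpos : e 0 < riccatiTan γ b (0 + s) := by
    rw [he0]
    exact mul_pos (sqrt_pos.2 (div_pos hb hγ))
      (tan_pos_of_pos_of_lt_pi_div_two (by positivity) (harg 0 ⟨le_rfl, ht.1.trans ht.2⟩).2)
  refine image_le_of_deriv_lt_deriv_boundary_of_lt he_cont
    (fun x hx => (he_diff x hx).hasDerivAt) hpos
    (fun x hx => (hderiv x hx).continuousAt.continuousWithinAt)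
    (fun x hx => hderiv x (Ioo_subset_Icc_self hx)) (fun x hx hx_eq => ?_) ht
  have := he_ineq x hx
  rw [hx_eq] at this
  linarith

theorem riccati_comparison_general (γ η T : ℝ) (hγ : 0 < γ) (hη : 0 < η)
    (hTlt : T < Real.pi / (2 * Real.sqrt (η * γ)))
    (e : ℝ → ℝ) (he_cont : ContinuousOn e (Set.Icc 0 T)) (he0 : e 0 = 0)
    (he_diff : ∀ t ∈ Set.Ioo 0 T, DifferentiableAt ℝ e t)
    (he_ineq : ∀ t ∈ Set.Ioo 0 T, deriv e t ≤ γ * e t ^ 2 + η) :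
    ∀ t ∈ Set.Icc 0 T,
      e t ≤ Real.sqrt (η / γ) * Real.tan (t * Real.sqrt (η * γ)) := by
  intro t ht
  show e t ≤ riccatiTan γ η t
  have hk : 0 < √(η * γ) := sqrt_pos.2 (mul_pos hη hγ)
  have hTk : T * √(η * γ) < π / 2 := by
    rwa [← div_div, lt_div_iff₀ hk] at hTlt
  have hperturb (x : ℝ) : Tendsto (fun δ => (η + δ, x + δ)) (𝓝[>] 0) (𝓝 (η, x)) := by
    have : Continuous fun δ : ℝ => (η + δ, x + δ) := by fun_prop
    simpa using (this.tendsto 0).mono_left nhdsWithin_le_nhds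
  have hsmall : ∀ᶠ δ in 𝓝[>] 0, (T + δ) * √((η + δ) * γ) < π / 2 :=
    (((show Continuous fun p : ℝ × ℝ => p.2 * √(p.1 * γ) by fun_prop).tendsto (η, T)).comp
      (hperturb T)).eventually_lt_const hTk
  have hcos : cos (t * √(η * γ)) ≠ 0 := (cos_pos_of_mem_Ioo
    ⟨by nlinarith [pi_pos, ht.1], (mul_le_mul_of_nonneg_right ht.2 hk.le).trans_lt hTk⟩).ne'
  refine ge_of_tendsto ((continuousAt_riccatiTan hcos).tendsto.comp (hperturb t)) ?_
  filter_upwards [hsmall, self_mem_nhdsWithin] with δ hδ (hδ0 : 0 < δ)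
  exact le_riccatiTan_add_of_deriv_le hγ (by positivity) (by linarith) hδ0 hδ he_cont he0
    he_diff he_ineq t ht

theorem riccati_comparison (γ η T : ℝ) (hγ : 0 < γ) (hη : 0 < η)
    (hT : 0 < T) (hTlt : T < Real.pi / (2 * Real.sqrt (η * γ)))
    (e : ℝ → ℝ) (he_cont : ContinuousOn e (Set.Icc 0 T)) (he0 : e 0 = 0)
    (he_diff : ∀ t ∈ Set.Ioo 0 T, DifferentiableAt ℝ e t)
    (he_ineq : ∀ t ∈ Set.Ioo 0 T, deriv e t ≤ γ * e t ^ 2 + η) :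
    ∀ t ∈ Set.Icc 0 T,
      e t ≤ Real.sqrt (η / γ) * Real.tan (t * Real.sqrt (η * γ)) :=
  riccati_comparison_general γ η T hγ hη hTlt e he_cont he0 he_diff he_ineq
end

section
/- Let μ > 0, η > 0, and s, ε with 0 < ε < s. Set γ := 32μ/(s−ε)² and let 0 < λ ≤ (s−ε)/(4√(2μη)). Let e : [0,λ] → ℝ be continuous with e(0) = 0, differentiable on (0,λ), and satisfying e'(t) ≤ γ·e(t)² + η for all t ∈ (0,λ). Then e(t) ≤ 2tη for all t ∈ [0,λ]. -/
/-!
With `c = √(γ/η)` the inequality reads `e' ≤ η (1 + (c e)²)`, so `arctan (c e(t)) - c η t` has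
nonpositive derivative and vanishes at `0`. Hence `c e(t) ≤ tan (√(γη) t)` while `√(γη) t < π/2`,
and the bound on `λ` is exactly `√(γη) λ ≤ 1`, a range on which `tan x ≤ 2x`.
-/

open Real Set

theorem Real.le_tan_of_arctan_le {x y : ℝ} (h : arctan y ≤ x) (hx : x < π / 2) : y ≤ tan x := by
  rwa [← arctan_le_arctan_iff, arctan_tan ((neg_pi_div_two_lt_arctan y).trans_le h) hx]

theorem Real.tan_le_two_mul {x : ℝ} (h0 : 0 ≤ x) (h1 : x ≤ 1) : tan x ≤ 2 * x := by
  have hcos : 0 < cos x := cos_pos_of_mem_Ioo ⟨by linarith [pi_pos], by linarith [pi_gt_three]⟩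
  rw [tan_eq_sin_div_cos, div_le_iff₀ hcos]
  nlinarith [sin_le h0, one_sub_sq_div_two_le_cos (x := x), mul_nonneg h0 (sub_nonneg.2 h1)]

theorem antitoneOn_arctan_mul_sub_of_deriv_le {c η a b : ℝ} (hc : 0 ≤ c) {e : ℝ → ℝ}
    (hcont : ContinuousOn e (Icc a b)) (hdiff : ∀ t ∈ Ioo a b, DifferentiableAt ℝ e t)
    (hineq : ∀ t ∈ Ioo a b, deriv e t ≤ η * (1 + (c * e t) ^ 2)) :
    AntitoneOn (fun t => arctan (c * e t) - c * η * t) (Icc a b) := by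
  have hderiv : ∀ t ∈ Ioo a b, HasDerivAt (fun t => arctan (c * e t) - c * η * t)
      (1 / (1 + (c * e t) ^ 2) * (c * deriv e t) - c * η) t := fun t ht =>
    (((hdiff t ht).hasDerivAt.const_mul c).arctan.sub
      ((hasDerivAt_id' t).const_mul (c * η))).congr_deriv (by ring)
  refine antitoneOn_of_deriv_nonpos (convex_Icc a b) ?_ ?_ ?_
  · fun_prop
  · rw [interior_Icc]
    exact fun t ht => (hderiv t ht).differentiableAt.differentiableWithinAt
  · rw [interior_Icc]
    intro t ht
    rw [(hderiv t ht).deriv, sub_nonpos, one_div_mul_eq_div, div_le_iff₀ (by positivity)]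
    calc c * deriv e t ≤ c * (η * (1 + (c * e t) ^ 2)) :=
          mul_le_mul_of_nonneg_left (hineq t ht) hc
      _ = c * η * (1 + (c * e t) ^ 2) := by ring

theorem le_sqrt_div_mul_tan_of_deriv_le_riccati {γ η lam : ℝ} (hγ : 0 < γ) (hη : 0 < η)
    {e : ℝ → ℝ} (hcont : ContinuousOn e (Icc 0 lam)) (he0 : e 0 = 0)
    (hdiff : ∀ t ∈ Ioo 0 lam, DifferentiableAt ℝ e t)
    (hineq : ∀ t ∈ Ioo 0 lam, deriv e t ≤ γ * e t ^ 2 + η)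
    {t : ℝ} (ht : t ∈ Icc 0 lam) (hπ : √γ * √η * t < π / 2) :
    e t ≤ √η / √γ * tan (√γ * √η * t) := by
  set c := √γ / √η
  have hc : 0 < c := by positivity
  have hrhs : ∀ t, γ * e t ^ 2 + η = η * (1 + (c * e t) ^ 2) := fun t => by
    simp only [c, div_pow, mul_pow, sq_sqrt hγ.le, sq_sqrt hη.le]
    field_simp
    ring
  have hcη : c * η = √γ * √η := by
    simp only [c]
    field_simp
    rw [sq_sqrt hη.le]
  have harctan : arctan (c * e t) ≤ √γ * √η * t := by
    have := antitoneOn_arctan_mul_sub_of_deriv_le hc.le hcont hdiff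
      (fun t ht => (hineq t ht).trans_eq (hrhs t)) ⟨le_rfl, ht.1.trans ht.2⟩ ht ht.1
    simp only [he0, mul_zero, arctan_zero, sub_zero] at this
    rw [← hcη]
    linarith
  have := le_tan_of_arctan_le harctan hπ
  rw [show √η / √γ = c⁻¹ by simp [c], inv_mul_eq_div, le_div_iff₀ hc]
  linarith

theorem riccati_comparison_two_t_eta_general (μ η s ε lam : ℝ) (hμ : 0 < μ) (hη : 0 < η)
    (hεs : ε < s) (γ : ℝ) (hγ : γ = 32 * μ / (s - ε) ^ 2)
    (hlam_le : lam ≤ (s - ε) / (4 * Real.sqrt (2 * μ * η)))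
    (e : ℝ → ℝ) (he_cont : ContinuousOn e (Set.Icc 0 lam)) (he0 : e 0 = 0)
    (he_diff : ∀ t ∈ Set.Ioo 0 lam, DifferentiableAt ℝ e t)
    (he_ineq : ∀ t ∈ Set.Ioo 0 lam, deriv e t ≤ γ * e t ^ 2 + η) :
    ∀ t ∈ Set.Icc 0 lam, e t ≤ 2 * t * η := by
  intro t ht
  have hse : 0 < s - ε := by linarith
  have hγ0 : 0 < γ := by rw [hγ]; positivity
  have hω : √γ * √η = 4 * √(2 * μ * η) / (s - ε) := by
    rw [← sqrt_mul hγ0.le, hγ, show 32 * μ / (s - ε) ^ 2 * η = (4 / (s - ε)) ^ 2 * (2 * μ * η) by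
      field_simp; ring, sqrt_mul (sq_nonneg _), sqrt_sq (by positivity)]
    ring
  have hωt : √γ * √η * t ≤ 1 := by
    rw [hω, div_mul_eq_mul_div, div_le_one hse]
    rw [le_div_iff₀ (by positivity)] at hlam_le
    nlinarith [ht.2, sqrt_nonneg (2 * μ * η)]
  have hωt0 : 0 ≤ √γ * √η * t := mul_nonneg (by positivity) ht.1
  calc e t ≤ √η / √γ * tan (√γ * √η * t) :=
        le_sqrt_div_mul_tan_of_deriv_le_riccati hγ0 hη he_cont he0 he_diff he_ineq ht
          (hωt.trans_lt (by linarith [pi_gt_three]))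
    _ ≤ √η / √γ * (2 * (√γ * √η * t)) := by gcongr; exact tan_le_two_mul hωt0 hωt
    _ = 2 * t * η := by
        field_simp
        rw [sq_sqrt hη.le]
        ring

theorem riccati_comparison_two_t_eta (μ η s ε lam : ℝ) (hμ : 0 < μ) (hη : 0 < η)
    (hε : 0 < ε) (hεs : ε < s) (γ : ℝ) (hγ : γ = 32 * μ / (s - ε) ^ 2)
    (hlam : 0 < lam) (hlam_le : lam ≤ (s - ε) / (4 * Real.sqrt (2 * μ * η)))
    (e : ℝ → ℝ) (he_cont : ContinuousOn e (Set.Icc 0 lam)) (he0 : e 0 = 0)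
    (he_diff : ∀ t ∈ Set.Ioo 0 lam, DifferentiableAt ℝ e t)
    (he_ineq : ∀ t ∈ Set.Ioo 0 lam, deriv e t ≤ γ * e t ^ 2 + η) :
    ∀ t ∈ Set.Icc 0 lam, e t ≤ 2 * t * η :=
  riccati_comparison_two_t_eta_general μ η s ε lam hμ hη hεs γ hγ hlam_le e he_cont he0 he_diff
    he_ineq
end

section
/- Let α > 0 and let σ : ℝ → ℝ be the LeakyReLU function σ(x) = max(x,0) + α·min(x,0). Then cond(σ;x) = 1 for every x ≠ 0. -/
open scoped ENNReal NNReal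

lemma div_div_self_eq_one (a b : ℝ≥0∞) (ha : a ≠ 0) (ha' : a ≠ ⊤) (hb : b ≠ 0) (hb' : b ≠ ⊤) :
    (a / b) / (a / b) = 1 :=
  ENNReal.div_self (by simp [ENNReal.div_eq_zero_iff, ha, hb'])
    (by simp [ENNReal.div_eq_top, ha', hb])

lemma ratio_one (α : ℝ) (hα : 0 < α) (σ : ℝ → ℝ)
    (hσ : σ = fun x => max x 0 + α * min x 0)
    (x δ : ℝ) (hx : x ≠ 0) (hδ : δ ≠ 0) (h : |δ| ≤ |x| / 2) :
    relErrRatio σ x δ = 1 := by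
  subst hσ
  have hδx : (‖δ‖₊ : ℝ≥0∞) ≠ 0 := by simpa using hδ
  have hδt : (‖δ‖₊ : ℝ≥0∞) ≠ ⊤ := ENNReal.coe_ne_top
  have hx0 : (‖x‖₊ : ℝ≥0∞) ≠ 0 := by simpa using hx
  have hxt : (‖x‖₊ : ℝ≥0∞) ≠ ⊤ := ENNReal.coe_ne_top
  rcases lt_or_gt_of_ne hx with hneg | hpos
  · -- x < 0, so x + δ < 0
    have habs : |x| = -x := abs_of_neg hneg
    have h1 : x + δ < 0 := by
      have : δ ≤ |δ| := le_abs_self δ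
      nlinarith [abs_nonneg δ]
    have e1 : max (x + δ) 0 = 0 := max_eq_right h1.le
    have e2 : min (x + δ) 0 = x + δ := min_eq_left h1.le
    have e3 : max x 0 = 0 := max_eq_right hneg.le
    have e4 : min x 0 = x := min_eq_left hneg.le
    have key : (fun x => max x 0 + α * min x 0) (x + δ) - (fun x => max x 0 + α * min x 0) x
        = α * δ := by simp only [e1, e2, e3, e4]; ring
    have keyx : (fun x => max x 0 + α * min x 0) x = α * x := by
      simp only [e3, e4]; ring
    unfold relErrRatio
    rw [key, keyx, nnnorm_mul, nnnorm_mul, ENNReal.coe_mul, ENNReal.coe_mul,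
      ENNReal.mul_div_mul_left _ _ (by simpa using hα.ne') ENNReal.coe_ne_top]
    exact div_div_self_eq_one _ _ hδx hδt hx0 hxt
  · -- x > 0, so x + δ > 0
    have h1 : 0 < x + δ := by
      have : -δ ≤ |δ| := neg_le_abs δ
      have habs : |x| = x := abs_of_pos hpos
      nlinarith
    have e1 : max (x + δ) 0 = x + δ := max_eq_left h1.le
    have e2 : min (x + δ) 0 = 0 := min_eq_right h1.le
    have e3 : max x 0 = x := max_eq_left hpos.le
    have e4 : min x 0 = 0 := min_eq_right hpos.le
    have key : (fun x => max x 0 + α * min x 0) (x + δ) - (fun x => max x 0 + α * min x 0) x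
        = δ := by simp only [e1, e2, e3, e4]; ring
    have keyx : (fun x => max x 0 + α * min x 0) x = x := by
      simp only [e3, e4]; ring
    unfold relErrRatio
    rw [key, keyx]
    exact div_div_self_eq_one _ _ hδx hδt hx0 hxt

theorem condAt_leakyReLU (α : ℝ) (hα : 0 < α) (σ : ℝ → ℝ)
    (hσ : σ = fun x => max x 0 + α * min x 0) :
    ∀ x : ℝ, x ≠ 0 → condAt σ x = 1 := by
  intro x hx
  unfold condAt
  apply le_antisymm
  · refine iInf_le_of_le (1/2) (iInf_le_of_le (by norm_num) ?_)
    refine iSup_le fun δ => iSup_le fun hδ => iSup_le fun hle => ?_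
    have h : |δ| ≤ |x| / 2 := by
      rw [Real.norm_eq_abs, Real.norm_eq_abs] at hle; linarith
    exact (ratio_one α hα σ hσ x δ hx hδ h).le
  · refine le_iInf fun ε => le_iInf fun hε => ?_
    set c : ℝ := min ε (1/2) with hc
    have hc0 : 0 < c := lt_min hε (by norm_num)
    have hδ0 : c * x ≠ 0 := mul_ne_zero hc0.ne' hx
    have hle : ‖c * x‖ ≤ ε * ‖x‖ := by
      rw [norm_mul]
      have : ‖c‖ ≤ ε := by rw [Real.norm_eq_abs, abs_of_pos hc0]; exact min_le_left _ _
      exact mul_le_mul_of_nonneg_right this (norm_nonneg x)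
    refine le_iSup_of_le (c * x) (le_iSup_of_le hδ0 (le_iSup_of_le hle ?_))
    have h : |c * x| ≤ |x| / 2 := by
      rw [abs_mul, abs_of_pos hc0]
      have : c ≤ 1/2 := min_le_right _ _
      nlinarith [abs_nonneg x]
    exact (ratio_one α hα σ hσ x (c * x) hx hδ0 h).ge
end

section
/- Let σ : ℝ → ℝ be the SiLU function σ(x) = x/(1+exp(−x)) = x·S(x) with S(x) = 1/(1+exp(−x)). Then σ'(x) = S(x) + x·S(x)·(1−S(x)), and for every x > 0 one has σ'(x)·x/σ(x) = 1 + x·(1−S(x)) ≤ 1 + 1/e. -/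
/-!
Writing `σ x = x * sigmoid x`, the product rule and `sigmoid' = sigmoid * (1 - sigmoid)` give the
derivative, and dividing by `σ x` gives the condition number `1 + x * (1 - sigmoid x)`.
Since `1 - sigmoid x = sigmoid (-x) = sigmoid x * exp (-x) ≤ exp (-x)`, the excess over `1` is at
most `x * exp (-x)`, whose maximum over `ℝ` is `exp (-1)`, attained at `x = 1`.
-/

open Real

lemma hasDerivAt_mul_sigmoid (x : ℝ) :
    HasDerivAt (fun y => y * sigmoid y) (sigmoid x + x * sigmoid x * (1 - sigmoid x)) x :=
  ((hasDerivAt_id' x).fun_mul (hasDerivAt_sigmoid x)).congr_deriv (by ring)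

lemma deriv_mul_sigmoid_mul_div {x : ℝ} (hx : x ≠ 0) :
    deriv (fun y => y * sigmoid y) x * x / (x * sigmoid x) = 1 + x * (1 - sigmoid x) := by
  have hs : sigmoid x ≠ 0 := (sigmoid_pos x).ne'
  rw [(hasDerivAt_mul_sigmoid x).deriv]
  field

lemma mul_sigmoid_neg_le_exp_neg_one (x : ℝ) : x * sigmoid (-x) ≤ exp (-1) := by
  rcases lt_or_ge x 0 with hx | hx
  · nlinarith [sigmoid_pos (-x), exp_pos (-1)]
  · calc x * sigmoid (-x) = x * exp (-x) * sigmoid x := by rw [← sigmoid_mul_rexp_neg]; ring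
      _ ≤ x * exp (-x) := mul_le_of_le_one_right (by positivity) (sigmoid_le_one x)
      _ ≤ exp (-1) := mul_exp_neg_le_exp_neg_one x

theorem cond_silu_le_one_add_inv_e (σ S : ℝ → ℝ)
    (hσ : σ = fun x => x / (1 + Real.exp (-x)))
    (hS : S = fun x => 1 / (1 + Real.exp (-x))) :
    (∀ x : ℝ, HasDerivAt σ (S x + x * S x * (1 - S x)) x) ∧
      ∀ x : ℝ, 0 < x →
        deriv σ x * x / σ x = 1 + x * (1 - S x) ∧
        1 + x * (1 - S x) ≤ 1 + 1 / Real.exp 1 := by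
  have hS' : S = sigmoid := by
    rw [hS]; ext x; rw [one_div, sigmoid_def]
  have hσ' : σ = fun x => x * sigmoid x := by
    rw [hσ]; ext x; rw [sigmoid_def, div_eq_mul_inv]
  subst hS' hσ'
  refine ⟨hasDerivAt_mul_sigmoid, fun x hx => ⟨deriv_mul_sigmoid_mul_div hx.ne', ?_⟩⟩
  rw [← sigmoid_neg, one_div, ← exp_neg]
  linarith [mul_sigmoid_neg_le_exp_neg_one x]
end
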